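/- arXiv:1902.07757 — 5 statements merged into one kernel-verified Lean document; each statement's English description precedes it below -/
import Mathlib

section
/- Let n_c ≥ 1, n_t = 2 n_c, and λ, μ ∈ ℂ. With A, A_c, R_I, P_Φ as follows: A ∈ ℂ^{(n_t+1)×(n_t+1)} with A_{ii} = 1, A_{i,i−1} = −λ, zero otherwise; A_c ∈ ℂ^{(n_c+1)×(n_c+1)} with (A_c)_{ii} = 1, (A_c)_{i,i−1} = −μ, zero otherwise; (R_I)_{i,2i} = 1 and zero otherwise; (P_Φ)_{2i,i} = 1, (P_Φ)_{2i+1,i} = λ and zero otherwise — the two-level error propagator with F-relaxation, T = (I − P_Φ A_c^{−1} R_I A) P_Φ R_I ∈ ℂ^{(n_t+1)×(n_t+1)}, is nilpotent; in particular its spectral radius is zero. -/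
/-!
Since `R_I P_Φ = 1`, the propagator factors as `T = P_Φ E R_I` with
`E = 1 - A_c⁻¹ (R_I A P_Φ)`, and then `T ^ (k + 1) = P_Φ E ^ (k + 1) R_I`. The Galerkin product
`R_I A P_Φ` is the coarse time-stepping matrix of the two-step propagator `λ²`, so
`E = A_c⁻¹ (A_c - R_I A P_Φ)` is lower triangular times strictly lower triangular. Hence `E` is
strictly lower triangular, so nilpotent, and so is `T`.
-/

open Matrix

namespace Matrix

variable {n R : Type*} [Fintype n] [LinearOrder n]

theorem IsLowerTriangular.mul_apply_self [NonUnitalNonAssocSemiring R] {M N : Matrix n n R}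
    (hM : M.IsLowerTriangular) (hN : N.IsLowerTriangular) (i : n) :
    (M * N) i i = M i i * N i i := by
  rw [mul_apply, Fintype.sum_eq_single i]
  intro k hki
  rcases lt_or_gt_of_ne hki with hlt | hgt
  · rw [hN (show OrderDual.toDual i < OrderDual.toDual k from hlt), mul_zero]
  · rw [hM (show OrderDual.toDual k < OrderDual.toDual i from hgt), zero_mul]

theorem IsLowerTriangular.isNilpotent [CommRing R] [DecidableEq n] {M : Matrix n n R}
    (hM : M.IsLowerTriangular) (hdiag : ∀ i, M i i = 0) : IsNilpotent M := by
  -- Cayley–Hamilton, with the characteristic polynomial read off the diagonal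
  have hchar : M.charpoly = Polynomial.X ^ Fintype.card n := by
    rw [← charpoly_transpose, charpoly_of_isUpperTriangular Mᵀ hM.transpose]
    simp [hdiag]
  refine ⟨Fintype.card n, ?_⟩
  simpa [hchar] using aeval_self_charpoly M

end Matrix

theorem Matrix.isNilpotent_mul_mul_of_mul_eq_one {m n R : Type*} [Fintype m] [Fintype n]
    [DecidableEq m] [DecidableEq n] [Semiring R] {P : Matrix m n R} {E : Matrix n n R}
    {Q : Matrix n m R} (hQP : Q * P = 1) (hE : IsNilpotent E) : IsNilpotent (P * E * Q) := by
  have hpow : ∀ k, (P * E * Q) ^ (k + 1) = P * E ^ (k + 1) * Q := by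
    intro k
    induction k with
    | zero => simp
    | succ k ih =>
      rw [pow_succ, ih, pow_succ E (k + 1)]
      simp only [Matrix.mul_assoc]
      rw [← Matrix.mul_assoc Q P, hQP, Matrix.one_mul]
  obtain ⟨k, hk⟩ := hE
  refine ⟨k + 1, ?_⟩
  rw [hpow, pow_succ, hk, Matrix.zero_mul, Matrix.mul_zero, Matrix.zero_mul]

theorem spectrum_subset_singleton_zero_of_isNilpotent {𝕜 A : Type*} [Field 𝕜] [Ring A]
    [Algebra 𝕜 A] {a : A} (ha : IsNilpotent a) : spectrum 𝕜 a ⊆ {0} := by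
  intro z hz
  by_contra hz0
  rw [spectrum.mem_iff, sub_eq_add_neg] at hz
  exact hz <| ha.neg.isUnit_add_left_of_commute ((isUnit_iff_ne_zero.mpr hz0).map (algebraMap 𝕜 A))
    (Algebra.commutes z (-a)).symm

section TimeStepping

variable {R : Type*} [CommRing R]

/-- The system matrix of the scheme `u_{i+1} = c u_i` on the time points `0, …, n - 1`. -/
def timeStepping (n : ℕ) (c : R) : Matrix (Fin n) (Fin n) R :=
  Matrix.of fun i j => if (i : ℕ) = j then 1 else if (i : ℕ) = j + 1 then -c else 0

variable (R) in
/-- Injection `R_I` of the fine grid `0, …, 2 nc` onto its C-points `0, 2, …, 2 nc`. -/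
def injection (nc : ℕ) : Matrix (Fin (nc + 1)) (Fin (2 * nc + 1)) R :=
  Matrix.of fun i j => if (j : ℕ) = 2 * i then 1 else 0

/-- Ideal interpolation `P_Φ`: a C-point value is kept and propagated by `c` to the next F-point. -/
def idealInterpolation (nc : ℕ) (c : R) : Matrix (Fin (2 * nc + 1)) (Fin (nc + 1)) R :=
  Matrix.of fun i j => if (i : ℕ) = 2 * j then 1 else if (i : ℕ) = 2 * j + 1 then c else 0

theorem timeStepping_isLowerTriangular (n : ℕ) (c : R) :
    (timeStepping n c).IsLowerTriangular := by
  intro i j hij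
  have : (i : ℕ) < j := hij
  simp only [timeStepping, of_apply]
  split_ifs <;> first | rfl | omega

theorem timeStepping_apply_self (n : ℕ) (c : R) (i : Fin n) : timeStepping n c i i = 1 := by
  simp [timeStepping]

theorem det_timeStepping (n : ℕ) (c : R) : (timeStepping n c).det = 1 := by
  rw [det_of_isLowerTriangular _ (timeStepping_isLowerTriangular n c)]
  simp [timeStepping_apply_self]

theorem injection_mul_apply {α : Type*} {nc : ℕ} (M : Matrix (Fin (2 * nc + 1)) α R)
    (i : Fin (nc + 1)) (j : α) :
    (injection R nc * M) i j = M ⟨2 * i, by omega⟩ j := by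
  rw [mul_apply, Fintype.sum_eq_single ⟨2 * i, by omega⟩]
  · simp [injection]
  · intro k hk
    simp only [injection, of_apply, ite_mul, one_mul, zero_mul]
    exact if_neg fun h => hk (Fin.ext h)

theorem injection_mul_idealInterpolation (nc : ℕ) (c : R) :
    injection R nc * idealInterpolation nc c = 1 := by
  ext i j
  rw [injection_mul_apply, one_apply]
  simp only [idealInterpolation, of_apply, Fin.ext_iff]
  split_ifs <;> first | rfl | omega

theorem injection_mul_timeStepping_mul_idealInterpolation (nc : ℕ) (c : R) :
    injection R nc * timeStepping (2 * nc + 1) c * idealInterpolation nc c =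
      timeStepping (nc + 1) (c ^ 2) := by
  ext i j
  rw [Matrix.mul_assoc, injection_mul_apply, mul_apply]
  -- the only index `l` with both factors possibly nonzero is `i + j`
  rw [Fintype.sum_eq_single ⟨i + j, by omega⟩]
  · simp only [timeStepping, idealInterpolation, of_apply]
    split_ifs <;> first | omega | ring1
  · intro l hl
    have hl' : (l : ℕ) ≠ i + j := fun h => hl (Fin.ext h)
    simp only [timeStepping, idealInterpolation, of_apply]
    split_ifs <;> first | omega | ring1

theorem isNilpotent_one_sub_inv_mul_timeStepping (n : ℕ) (a b : R) :
    IsNilpotent (1 - (timeStepping n b)⁻¹ * timeStepping n a) := by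
  have hunit : IsUnit (timeStepping n b).det := by simp [det_timeStepping]
  have : Invertible (timeStepping n b) := invertibleOfIsUnitDet _ hunit
  have hinv : (timeStepping n b)⁻¹.IsLowerTriangular :=
    blockTriangular_inv_of_blockTriangular (timeStepping_isLowerTriangular n b)
  have hdiff : (timeStepping n b - timeStepping n a).IsLowerTriangular :=
    (timeStepping_isLowerTriangular n b).sub (timeStepping_isLowerTriangular n a)
  rw [← nonsing_inv_mul _ hunit, ← Matrix.mul_sub]
  refine IsLowerTriangular.isNilpotent (hinv.mul hdiff) fun i => ?_
  rw [hinv.mul_apply_self hdiff, Matrix.sub_apply, timeStepping_apply_self, timeStepping_apply_self,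
    sub_self, mul_zero]

end TimeStepping

theorem stmt_5_general (nc : ℕ) (lam mu : ℂ)
    (A : Matrix (Fin (2 * nc + 1)) (Fin (2 * nc + 1)) ℂ)
    (hA : ∀ i j, A i j =
      if (i : ℕ) = (j : ℕ) then 1 else if (i : ℕ) = (j : ℕ) + 1 then -lam else 0)
    (Ac : Matrix (Fin (nc + 1)) (Fin (nc + 1)) ℂ)
    (hAc : ∀ i j, Ac i j =
      if (i : ℕ) = (j : ℕ) then 1 else if (i : ℕ) = (j : ℕ) + 1 then -mu else 0)
    (RI : Matrix (Fin (nc + 1)) (Fin (2 * nc + 1)) ℂ)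
    (hRI : ∀ i j, RI i j = if (j : ℕ) = 2 * (i : ℕ) then 1 else 0)
    (PΦ : Matrix (Fin (2 * nc + 1)) (Fin (nc + 1)) ℂ)
    (hPΦ : ∀ i j, PΦ i j =
      if (i : ℕ) = 2 * (j : ℕ) then 1
      else if (i : ℕ) = 2 * (j : ℕ) + 1 then lam else 0)
    (T : Matrix (Fin (2 * nc + 1)) (Fin (2 * nc + 1)) ℂ)
    (hT : T = (1 - PΦ * Ac⁻¹ * RI * A) * (PΦ * RI)) :
    IsNilpotent T ∧ spectrum ℂ T ⊆ {0} := by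
  obtain rfl : A = timeStepping (2 * nc + 1) lam := ext hA
  obtain rfl : Ac = timeStepping (nc + 1) mu := ext hAc
  obtain rfl : RI = injection ℂ nc := ext hRI
  obtain rfl : PΦ = idealInterpolation nc lam := ext hPΦ
  have hfactor : T = idealInterpolation nc lam *
      (1 - (timeStepping (nc + 1) mu)⁻¹ * timeStepping (nc + 1) (lam ^ 2)) * injection ℂ nc := by
    rw [hT, ← injection_mul_timeStepping_mul_idealInterpolation]
    simp only [Matrix.sub_mul, Matrix.mul_sub, Matrix.one_mul, Matrix.mul_one, Matrix.mul_assoc]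
  have hnil : IsNilpotent T := hfactor ▸ isNilpotent_mul_mul_of_mul_eq_one
    (injection_mul_idealInterpolation nc lam) (isNilpotent_one_sub_inv_mul_timeStepping _ _ _)
  exact ⟨hnil, spectrum_subset_singleton_zero_of_isNilpotent hnil⟩

/-- Per-Fourier-mode two-level MGRIT/Parareal with F-relaxation and coarsening factor
`m = 2`: with `n_t = 2 n_c`, fine-grid operator `A` (unit lower bidiagonal with
subdiagonal `−λ`), coarse-grid operator `A_c` (unit lower bidiagonal with subdiagonal
`−μ`), injection restriction `R_I` and ideal interpolation `P_Φ`, the error propagator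
`T = (I − P_Φ A_c⁻¹ R_I A) P_Φ R_I` is nilpotent; in particular its spectral radius is
zero, i.e. its spectrum is contained in `{0}`. -/
theorem stmt_5 (nc : ℕ) (hnc : 1 ≤ nc) (lam mu : ℂ)
    (A : Matrix (Fin (2 * nc + 1)) (Fin (2 * nc + 1)) ℂ)
    (hA : ∀ i j, A i j =
      if (i : ℕ) = (j : ℕ) then 1 else if (i : ℕ) = (j : ℕ) + 1 then -lam else 0)
    (Ac : Matrix (Fin (nc + 1)) (Fin (nc + 1)) ℂ)
    (hAc : ∀ i j, Ac i j =
      if (i : ℕ) = (j : ℕ) then 1 else if (i : ℕ) = (j : ℕ) + 1 then -mu else 0)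
    (RI : Matrix (Fin (nc + 1)) (Fin (2 * nc + 1)) ℂ)
    (hRI : ∀ i j, RI i j = if (j : ℕ) = 2 * (i : ℕ) then 1 else 0)
    (PΦ : Matrix (Fin (2 * nc + 1)) (Fin (nc + 1)) ℂ)
    (hPΦ : ∀ i j, PΦ i j =
      if (i : ℕ) = 2 * (j : ℕ) then 1
      else if (i : ℕ) = 2 * (j : ℕ) + 1 then lam else 0)
    (T : Matrix (Fin (2 * nc + 1)) (Fin (2 * nc + 1)) ℂ)
    (hT : T = (1 - PΦ * Ac⁻¹ * RI * A) * (PΦ * RI)) :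
    IsNilpotent T ∧ spectrum ℂ T ⊆ {0} :=
  stmt_5_general nc lam mu A hA Ac hAc RI hRI PΦ hPΦ T hT
end

section
/- Let n ≥ 1, m ≥ 1 an integer, and λ, μ ∈ ℂ with |μ| < 1. Let E ∈ ℂ^{n×n} be the strictly lower triangular Toeplitz matrix with entries E_{ij} = (λ^m − μ) μ^{i−j−1} for i > j and E_{ij} = 0 otherwise. Then the operator 2-norm satisfies ‖E‖₂ ≤ |λ^m − μ| · (1 − |μ|^n)/(1 − |μ|). -/
/-!
Parareal error propagation is a strictly lower triangular Toeplitz matrix, so every row sum and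
every column sum of its entrywise moduli is a truncation of `∑ₖ ‖a k‖` over `k < n`. The Schur
test bounds the spectral norm by the geometric mean of the maximal row and column sums, and for
`a k = (λ^m - μ) μ^k` the bound is the geometric sum `‖λ^m - μ‖ (1 - ‖μ‖^n) / (1 - ‖μ‖)`.
-/

open Matrix

/-- The operator 2-norm (largest singular value) of a complex square matrix. -/
noncomputable def l2OpNorm {n : ℕ} (M : Matrix (Fin n) (Fin n) ℂ) : ℝ :=
  ‖Matrix.toEuclideanCLM (𝕜 := ℂ) M‖

open Finset

namespace Matrix

def strictLowerToeplitz {α : Type*} [Zero α] (n : ℕ) (a : ℕ → α) : Matrix (Fin n) (Fin n) α :=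
  of fun i j => if (j : ℕ) < i then a (i - j - 1) else 0

@[simp]
theorem strictLowerToeplitz_apply {α : Type*} [Zero α] {n : ℕ} (a : ℕ → α) (i j : Fin n) :
    strictLowerToeplitz n a i j = if (j : ℕ) < i then a (i - j - 1) else 0 :=
  rfl

theorem sum_strictLowerToeplitz_row {M : Type*} [AddCommMonoid M] {n : ℕ} (a : ℕ → M)
    (i : Fin n) :
    ∑ j, strictLowerToeplitz n a i j = ∑ k ∈ range i, a k := by
  have hfilter : {j ∈ range n | j < (i : ℕ)} = range i := by
    ext; simp only [mem_filter, mem_range]; omega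
  simp only [strictLowerToeplitz_apply]
  rw [Fin.sum_univ_eq_sum_range (fun j => if j < (i : ℕ) then a (i - j - 1) else 0),
    ← sum_filter, hfilter, ← sum_range_reflect]
  exact sum_congr rfl fun j hj => by rw [mem_range] at hj; congr 1; omega

theorem sum_strictLowerToeplitz_col {M : Type*} [AddCommMonoid M] {n : ℕ} (a : ℕ → M)
    (j : Fin n) :
    ∑ i, strictLowerToeplitz n a i j = ∑ k ∈ range (n - j - 1), a k := by
  have hfilter : {i ∈ range n | (j : ℕ) < i} = Ico ((j : ℕ) + 1) n := by
    ext; simp only [mem_filter, mem_range, mem_Ico]; omega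
  simp only [strictLowerToeplitz_apply]
  rw [Fin.sum_univ_eq_sum_range (fun i => if (j : ℕ) < i then a (i - j - 1) else 0),
    ← sum_filter, hfilter, sum_Ico_eq_sum_range, Nat.sub_sub]
  exact sum_congr rfl fun k _ => by congr 1; omega

variable {𝕜 : Type*} [RCLike 𝕜]

theorem norm_mulVec_apply_sq_le {m n : Type*} [Fintype n] (A : Matrix m n 𝕜) (x : n → 𝕜)
    (i : m) : ‖(A *ᵥ x) i‖ ^ 2 ≤ (∑ j, ‖A i j‖) * ∑ j, ‖A i j‖ * ‖x j‖ ^ 2 := by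
  calc ‖(A *ᵥ x) i‖ ^ 2 ≤ (∑ j, ‖A i j‖ * ‖x j‖) ^ 2 := by
        gcongr
        exact (norm_sum_le _ _).trans_eq (by simp only [norm_mul])
    _ ≤ _ := sum_sq_le_sum_mul_sum_of_sq_le_mul _ (fun _ _ => norm_nonneg _)
        (fun _ _ => by positivity) fun _ _ => (by ring : _ = _).le

theorem norm_toEuclideanCLM_le_sqrt_of_sum_norm_le {n : Type*} [Fintype n] [DecidableEq n]
    (A : Matrix n n 𝕜) {R C : ℝ} (hR : ∀ i, ∑ j, ‖A i j‖ ≤ R) (hC : ∀ j, ∑ i, ‖A i j‖ ≤ C) :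
    ‖toEuclideanCLM (𝕜 := 𝕜) A‖ ≤ √(R * C) := by
  refine ContinuousLinearMap.opNorm_le_bound _ (Real.sqrt_nonneg _) fun x => ?_
  rw [← Real.sqrt_sq (norm_nonneg _), ← Real.sqrt_sq (norm_nonneg x), ← Real.sqrt_mul']
  · refine Real.sqrt_le_sqrt ?_
    rcases isEmpty_or_nonempty n with _ | ⟨⟨i₀⟩⟩
    · simp [EuclideanSpace.norm_sq_eq]
    have hR₀ : 0 ≤ R := (sum_nonneg fun _ _ => norm_nonneg _).trans (hR i₀)
    simp only [EuclideanSpace.norm_sq_eq, ofLp_toEuclideanCLM]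
    calc ∑ i, ‖(A *ᵥ x) i‖ ^ 2 ≤ ∑ i, R * ∑ j, ‖A i j‖ * ‖x j‖ ^ 2 := by
          gcongr with i
          exact (norm_mulVec_apply_sq_le A x i).trans (by gcongr; exact hR i)
      _ = R * ∑ j, (∑ i, ‖A i j‖) * ‖x j‖ ^ 2 := by
          simp only [← mul_sum, sum_mul]; rw [sum_comm]
      _ ≤ R * ∑ j, C * ‖x j‖ ^ 2 := by gcongr with j; exact hC j
      _ = R * C * ∑ j, ‖x j‖ ^ 2 := by rw [← mul_sum, mul_assoc]
  · positivity

theorem norm_toEuclideanCLM_strictLowerToeplitz_le {n : ℕ} (a : ℕ → 𝕜) :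
    ‖toEuclideanCLM (𝕜 := 𝕜) (strictLowerToeplitz n a)‖ ≤ ∑ k ∈ range n, ‖a k‖ := by
  have hnorm : ∀ i j, ‖strictLowerToeplitz n a i j‖ = strictLowerToeplitz n (‖a ·‖) i j := by
    intro i j
    rw [strictLowerToeplitz_apply, strictLowerToeplitz_apply, apply_ite norm, norm_zero]
  have hsum : ∀ l ≤ n, ∑ k ∈ range l, ‖a k‖ ≤ ∑ k ∈ range n, ‖a k‖ := fun l hl =>
    sum_le_sum_of_subset_of_nonneg (range_subset_range.2 hl) fun _ _ _ => norm_nonneg _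
  calc _ ≤ √((∑ k ∈ range n, ‖a k‖) * ∑ k ∈ range n, ‖a k‖) := by
        refine norm_toEuclideanCLM_le_sqrt_of_sum_norm_le _ (fun i => ?_) fun j => ?_
        · simpa only [hnorm, sum_strictLowerToeplitz_row] using hsum i i.is_lt.le
        · simpa only [hnorm, sum_strictLowerToeplitz_col] using
            hsum _ ((Nat.sub_le _ _).trans (Nat.sub_le _ _))
    _ = _ := Real.sqrt_mul_self (sum_nonneg fun _ _ => norm_nonneg _)

end Matrix

theorem stmt_7_general (n m : ℕ) (lam mu : ℂ)
    (hmu : ‖mu‖ < 1)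
    (E : Matrix (Fin n) (Fin n) ℂ)
    (hE : ∀ i j, E i j =
      if (j : ℕ) < (i : ℕ) then (lam ^ m - mu) * mu ^ ((i : ℕ) - (j : ℕ) - 1) else 0) :
    l2OpNorm E ≤ ‖lam ^ m - mu‖ *
      ((1 - ‖mu‖ ^ n) / (1 - ‖mu‖)) := by
  have hE_toeplitz : E = strictLowerToeplitz n fun k => (lam ^ m - mu) * mu ^ k := by
    ext i j
    rw [hE, strictLowerToeplitz_apply]
  calc l2OpNorm E ≤ ∑ k ∈ range n, ‖(lam ^ m - mu) * mu ^ k‖ := by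
        rw [l2OpNorm, hE_toeplitz]
        exact norm_toEuclideanCLM_strictLowerToeplitz_le _
    _ = _ := by
        rw [← neg_div_neg_eq, neg_sub, neg_sub, ← geom_sum_eq hmu.ne, mul_sum]
        simp only [norm_mul, norm_pow]

/-- For `|μ| < 1`, the strictly lower triangular Toeplitz Parareal/two-level MGRIT
F-relaxation coarse-grid error propagator `E`, with `E_{ij} = (λ^m − μ) μ^{i−j−1}` for
`i > j` and `0` otherwise, satisfies `‖E‖₂ ≤ |λ^m − μ| (1 − |μ|^n)/(1 − |μ|)`. -/
theorem stmt_7 (n m : ℕ) (hn : 1 ≤ n) (hm : 1 ≤ m) (lam mu : ℂ)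
    (hmu : ‖mu‖ < 1)
    (E : Matrix (Fin n) (Fin n) ℂ)
    (hE : ∀ i j, E i j =
      if (j : ℕ) < (i : ℕ) then (lam ^ m - mu) * mu ^ ((i : ℕ) - (j : ℕ) - 1) else 0) :
    l2OpNorm E ≤ ‖lam ^ m - mu‖ *
      ((1 - ‖mu‖ ^ n) / (1 - ‖mu‖)) :=
  stmt_7_general n m lam mu hmu E hE
end

section
/- Let n ≥ 2, m ≥ 1 an integer, and λ, μ ∈ ℂ with |μ| < 1. Let E′ ∈ ℂ^{n×n} be the Toeplitz matrix with entries E′_{ij} = λ^m (λ^m − μ) μ^{i−j−2} for i ≥ j + 2 and E′_{ij} = 0 otherwise. Then the operator 2-norm satisfies ‖E′‖₂ ≤ |λ|^m · |λ^m − μ| · (1 − |μ|^{n−1})/(1 − |μ|). -/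
/-!
`E′` is a banded lower-triangular Toeplitz matrix: its `k`-th subdiagonal (`k ≥ 2`) has entries
of modulus `|λ|^m |λ^m − μ| |μ|^(k−2)`. By the Schur test (Cauchy–Schwarz with weights `|M i j|`)
the 2-norm of a matrix is at most `√(R C)` when `R` and `C` bound its absolute row and column
sums. For a Toeplitz matrix both sums are at most the `ℓ¹`-norm of its symbol, here
`|λ|^m |λ^m − μ| ∑_{k < n−2} |μ|^k`, which is dominated by the geometric sum of the claim.
-/

open Matrix

open Finset

theorem Finset.sum_comp_le_sum_range {ι M : Type*} [AddCommMonoid M] [PartialOrder M]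
    [IsOrderedAddMonoid M] {s : Finset ι} {g : ι → ℕ} {N : ℕ} (hg : Set.InjOn g s)
    (hlt : ∀ x ∈ s, g x < N) {b : ℕ → M} (hb : ∀ k, 0 ≤ b k) :
    ∑ x ∈ s, b (g x) ≤ ∑ k ∈ range N, b k := by
  rw [← sum_image hg]
  refine sum_le_sum_of_subset_of_nonneg ?_ fun k _ _ ↦ hb k
  simpa [image_subset_iff] using hlt

section BandedToeplitz

variable {n : ℕ} (d : ℕ) {b : ℕ → ℝ}

theorem sum_banded_toeplitz_row_le (hb : ∀ k, 0 ≤ b k) (i : Fin n) :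
    ∑ j : Fin n, (if (j : ℕ) + d ≤ i then b (i - j - d) else 0) ≤ ∑ k ∈ range (n - d), b k := by
  rw [← sum_filter]
  refine sum_comp_le_sum_range ?_ ?_ hb
  · intro j hj j' hj' h
    simp only [mem_coe, mem_filter, mem_univ, true_and] at hj hj' h
    ext
    omega
  · intro j hj
    simp only [mem_filter, mem_univ, true_and] at hj
    omega

theorem sum_banded_toeplitz_col_le (hb : ∀ k, 0 ≤ b k) (j : Fin n) :
    ∑ i : Fin n, (if (j : ℕ) + d ≤ i then b (i - j - d) else 0) ≤ ∑ k ∈ range (n - d), b k := by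
  rw [← sum_filter]
  refine sum_comp_le_sum_range ?_ ?_ hb
  · intro i hi i' hi' h
    simp only [mem_coe, mem_filter, mem_univ, true_and] at hi hi' h
    ext
    omega
  · intro i hi
    simp only [mem_filter, mem_univ, true_and] at hi
    omega

end BandedToeplitz

theorem Finset.norm_sum_mul_sq_le {ι 𝕜 : Type*} [RCLike 𝕜] (s : Finset ι) (a x : ι → 𝕜) :
    ‖∑ j ∈ s, a j * x j‖ ^ 2 ≤ (∑ j ∈ s, ‖a j‖) * ∑ j ∈ s, ‖a j‖ * ‖x j‖ ^ 2 := by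
  calc ‖∑ j ∈ s, a j * x j‖ ^ 2 ≤ (∑ j ∈ s, ‖a j‖ * ‖x j‖) ^ 2 := by
        gcongr
        exact (norm_sum_le _ _).trans_eq (sum_congr rfl fun j _ ↦ norm_mul _ _)
    _ ≤ (∑ j ∈ s, ‖a j‖) * ∑ j ∈ s, ‖a j‖ * ‖x j‖ ^ 2 :=
        sum_sq_le_sum_mul_sum_of_sq_le_mul _ (fun j _ ↦ norm_nonneg _) (fun j _ ↦ by positivity)
          fun j _ ↦ (by ring : _ = _).le

theorem Matrix.norm_toEuclideanCLM_le_sqrt_mul {𝕜 n : Type*} [RCLike 𝕜] [Fintype n]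
    [DecidableEq n] (M : Matrix n n 𝕜) {R C : ℝ} (hR : 0 ≤ R)
    (hrow : ∀ i, ∑ j, ‖M i j‖ ≤ R) (hcol : ∀ j, ∑ i, ‖M i j‖ ≤ C) :
    ‖toEuclideanCLM (𝕜 := 𝕜) M‖ ≤ √(R * C) := by
  refine ContinuousLinearMap.opNorm_le_bound _ (Real.sqrt_nonneg _) fun x ↦ ?_
  rw [EuclideanSpace.norm_eq, EuclideanSpace.norm_eq, ← Real.sqrt_mul' _ (by positivity)]
  refine Real.sqrt_le_sqrt ?_
  calc ∑ i, ‖(toEuclideanCLM (𝕜 := 𝕜) M x) i‖ ^ 2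
      ≤ ∑ i, (∑ j, ‖M i j‖) * ∑ j, ‖M i j‖ * ‖x j‖ ^ 2 :=
        sum_le_sum fun i _ ↦ norm_sum_mul_sq_le _ (M i) x
    _ ≤ ∑ i, R * ∑ j, ‖M i j‖ * ‖x j‖ ^ 2 := by gcongr with i; exact hrow i
    _ = R * ∑ j, (∑ i, ‖M i j‖) * ‖x j‖ ^ 2 := by
        simp only [← mul_sum, sum_mul]
        rw [sum_comm]
    _ ≤ R * ∑ j, C * ‖x j‖ ^ 2 := by gcongr with j; exact hcol j
    _ = R * C * ∑ j, ‖x j‖ ^ 2 := by rw [← mul_sum, mul_assoc]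

theorem Matrix.norm_toEuclideanCLM_le_of_sum_norm_le {𝕜 n : Type*} [RCLike 𝕜] [Fintype n]
    [DecidableEq n] (M : Matrix n n 𝕜) {C : ℝ} (hC : 0 ≤ C)
    (hrow : ∀ i, ∑ j, ‖M i j‖ ≤ C) (hcol : ∀ j, ∑ i, ‖M i j‖ ≤ C) :
    ‖toEuclideanCLM (𝕜 := 𝕜) M‖ ≤ C :=
  (norm_toEuclideanCLM_le_sqrt_mul M hC hrow hcol).trans_eq (Real.sqrt_mul_self hC)

theorem stmt_8_general (n m : ℕ) (lam mu : ℂ)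
    (hmu : ‖mu‖ < 1)
    (E' : Matrix (Fin n) (Fin n) ℂ)
    (hE' : ∀ i j, E' i j =
      if (j : ℕ) + 2 ≤ (i : ℕ) then
        lam ^ m * (lam ^ m - mu) * mu ^ ((i : ℕ) - (j : ℕ) - 2) else 0) :
    l2OpNorm E' ≤ ‖lam‖ ^ m * ‖lam ^ m - mu‖ *
      ((1 - ‖mu‖ ^ (n - 1)) / (1 - ‖mu‖)) := by
  set c := ‖lam‖ ^ m * ‖lam ^ m - mu‖
  set q := ‖mu‖
  have hnorm : ∀ i j, ‖E' i j‖ = if (j : ℕ) + 2 ≤ i then c * q ^ ((i : ℕ) - j - 2) else 0 := by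
    intro i j
    rw [hE']
    split_ifs <;> simp [c, q]
  have hb : ∀ k, 0 ≤ c * q ^ k := fun k ↦ by positivity
  have hgeom : ∑ k ∈ range (n - 2), c * q ^ k ≤ c * ((1 - q ^ (n - 1)) / (1 - q)) := by
    rw [← mul_sum, ← neg_div_neg_eq, neg_sub, neg_sub, ← geom_sum_eq hmu.ne]
    gcongr
    norm_num
  refine le_trans (norm_toEuclideanCLM_le_of_sum_norm_le E' (sum_nonneg fun k _ ↦ hb k)
    (fun i ↦ ?_) (fun j ↦ ?_)) hgeom
  · simpa only [hnorm] using sum_banded_toeplitz_row_le 2 hb i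
  · simpa only [hnorm] using sum_banded_toeplitz_col_le 2 hb j

/-- For `|μ| < 1`, the Toeplitz two-level MGRIT FCF-relaxation coarse-grid error
propagator `E′`, with `E′_{ij} = λ^m (λ^m − μ) μ^{i−j−2}` for `i ≥ j + 2` and `0`
otherwise, satisfies `‖E′‖₂ ≤ |λ|^m |λ^m − μ| (1 − |μ|^{n−1})/(1 − |μ|)`. -/
theorem stmt_8 (n m : ℕ) (hn : 2 ≤ n) (hm : 1 ≤ m) (lam mu : ℂ)
    (hmu : ‖mu‖ < 1)
    (E' : Matrix (Fin n) (Fin n) ℂ)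
    (hE' : ∀ i j, E' i j =
      if (j : ℕ) + 2 ≤ (i : ℕ) then
        lam ^ m * (lam ^ m - mu) * mu ^ ((i : ℕ) - (j : ℕ) - 2) else 0) :
    l2OpNorm E' ≤ ‖lam‖ ^ m * ‖lam ^ m - mu‖ *
      ((1 - ‖mu‖ ^ (n - 1)) / (1 - ‖mu‖)) :=
  stmt_8_general n m lam mu hmu E' hE'
end

section
/- Let c ∈ ℝ with 0 ≤ c ≤ 1/2, and for θ ∈ ℝ define z(θ) = −(c/2)·(3 − 4e^{−iθ} + e^{−2iθ}) ∈ ℂ. Then |1 + z(θ) + z(θ)²/2| ≤ 1 for all θ ∈ ℝ. That is, the explicit scheme combining Heun's second-order Runge–Kutta method with the second-order upwind finite-difference discretization of ∂_t u + a ∂_x u = 0 on a periodic grid is stable under the CFL condition a Δt/Δx ≤ 1/2. -/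
/-!
With `w = e^{-iθ}` and `s = 1 - cos θ ∈ [0, 2]`, the upwind symbol `z = -(c/2)(1 - w)(3 - w)` has
`Re z = -c s²` and `|z|² = c² s (2 + 3s)`. For Heun's method
`|1 + z + z²/2|² = 1 + 2 Re z + 2 (Re z)² + Re z |z|² + |z|⁴/4`, which for this symbol becomes
`1 - c s² G(c, s)` with `G(c, s) = 2 - 2cs² + c²s(2 + 3s) - c³(2 + 3s)²/4`.
`G` is decreasing in `c` and `G(1/2, s) = (2 - s)(30 + 17s)/32`, so `G ≥ 0` under the CFL condition.
-/

open Complex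

lemma normSq_one_add_add_sq_div_two (z : ℂ) :
    normSq (1 + z + z ^ 2 / 2) =
      1 + 2 * z.re + 2 * z.re ^ 2 + z.re * normSq z + normSq z ^ 2 / 4 := by
  simp only [normSq_apply, add_re, add_im, one_re, one_im, div_ofNat_re, div_ofNat_im, pow_two,
    mul_re, mul_im]
  ring

lemma norm_one_add_add_sq_div_two_le_one {z : ℂ}
    (h : 2 * z.re + 2 * z.re ^ 2 + z.re * normSq z + normSq z ^ 2 / 4 ≤ 0) :
    ‖1 + z + z ^ 2 / 2‖ ≤ 1 := by
  have hsq : normSq (1 + z + z ^ 2 / 2) ≤ 1 := by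
    rw [normSq_one_add_add_sq_div_two]
    linarith
  rw [normSq_eq_norm_sq] at hsq
  exact (sq_le_one_iff₀ (norm_nonneg _)).1 hsq

noncomputable def upwindSymbol (c : ℝ) (w : ℂ) : ℂ := -((c : ℂ) / 2) * (3 - 4 * w + w ^ 2)

section UnitCircle

variable {w : ℂ}

lemma normSq_ofReal_sub_of_normSq_eq_one (a : ℝ) (hw : normSq w = 1) :
    normSq (a - w) = a ^ 2 + 1 - 2 * a * w.re := by
  rw [normSq_apply] at hw
  simp only [normSq_apply, sub_re, sub_im, ofReal_re, ofReal_im]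
  linear_combination hw

lemma upwindSymbol_re (c : ℝ) (hw : normSq w = 1) :
    (upwindSymbol c w).re = -c * (1 - w.re) ^ 2 := by
  rw [normSq_apply] at hw
  simp only [upwindSymbol, mul_re, neg_re, div_ofNat_re, div_ofNat_im, ofReal_re, ofReal_im,
    neg_im, sub_re, sub_im, add_re, add_im, pow_two, re_ofNat, im_ofNat]
  linear_combination (c / 2) * hw

lemma normSq_upwindSymbol (c : ℝ) (hw : normSq w = 1) :
    normSq (upwindSymbol c w) = c ^ 2 * (1 - w.re) * (2 + 3 * (1 - w.re)) := by
  have hfactor : upwindSymbol c w =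
      -((c / 2 : ℝ) : ℂ) * ((((1 : ℝ) : ℂ) - w) * (((3 : ℝ) : ℂ) - w)) := by
    rw [upwindSymbol]; push_cast; ring
  rw [hfactor, normSq_mul, normSq_mul, normSq_neg, normSq_ofReal,
    normSq_ofReal_sub_of_normSq_eq_one _ hw, normSq_ofReal_sub_of_normSq_eq_one _ hw]
  ring

end UnitCircle

lemma heun_upwind_margin_nonneg {c s : ℝ} (hc : c ≤ 1 / 2) (hs0 : 0 ≤ s) (hs : s ≤ 2) :
    0 ≤ 2 - 2 * c * s ^ 2 + c ^ 2 * s * (2 + 3 * s) - c ^ 3 * (2 + 3 * s) ^ 2 / 4 := by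
  have hslope : 0 ≤ 2 * s ^ 2 - s * (2 + 3 * s) * (c + 1 / 2)
      + (2 + 3 * s) ^ 2 / 4 * (c ^ 2 + c / 2 + 1 / 4) := by
    nlinarith [sq_nonneg ((2 + 3 * s) * (c + 1 / 4) - 2 * s)]
  have hedge : 0 ≤ (2 - s) * (30 + 17 * s) := by nlinarith
  nlinarith [mul_nonneg (sub_nonneg.2 hc) hslope]

theorem norm_heun_upwindSymbol_le_one {c : ℝ} (hc0 : 0 ≤ c) (hc : c ≤ 1 / 2) {w : ℂ}
    (hw : ‖w‖ = 1) :
    ‖1 + upwindSymbol c w + upwindSymbol c w ^ 2 / 2‖ ≤ 1 := by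
  have hw' : normSq w = 1 := by rw [normSq_eq_norm_sq, hw, one_pow]
  apply norm_one_add_add_sq_div_two_le_one
  rw [upwindSymbol_re c hw', normSq_upwindSymbol c hw']
  obtain ⟨hre_ge, hre_le⟩ := abs_le.1 (hw ▸ abs_re_le_norm w)
  set s := 1 - w.re
  have hG := heun_upwind_margin_nonneg (s := s) hc (by linarith) (by linarith)
  calc 2 * (-c * s ^ 2) + 2 * (-c * s ^ 2) ^ 2 + -c * s ^ 2 * (c ^ 2 * s * (2 + 3 * s))
        + (c ^ 2 * s * (2 + 3 * s)) ^ 2 / 4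
      = -(c * s ^ 2 * (2 - 2 * c * s ^ 2 + c ^ 2 * s * (2 + 3 * s)
          - c ^ 3 * (2 + 3 * s) ^ 2 / 4)) := by ring
    _ ≤ 0 := neg_nonpos.2 (mul_nonneg (mul_nonneg hc0 (sq_nonneg s)) hG)

/-- Stability of the explicit scheme pairing Heun's second-order Runge–Kutta method
(stability function `R(z) = 1 + z + z²/2`) with the second-order upwind finite-difference
discretization of the advection equation (symbol `z(θ) = −(c/2)(3 − 4e^{−iθ} + e^{−2iθ})`)
under the CFL condition `c = aΔt/Δx ≤ 1/2`: every eigenvalue of the time stepper has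
modulus at most 1. -/
theorem stmt_11 (c : ℝ) (hc0 : 0 ≤ c) (hc : c ≤ 1 / 2) (θ : ℝ)
    (z : ℂ)
    (hz : z = -((c : ℂ) / 2) *
      (3 - 4 * Complex.exp (-(Complex.I * θ)) + Complex.exp (-(2 * Complex.I * θ)))) :
    ‖1 + z + z ^ 2 / 2‖ ≤ 1 := by
  have hsq : Complex.exp (-(2 * Complex.I * θ)) = Complex.exp (-(Complex.I * θ)) ^ 2 := by
    rw [← Complex.exp_nat_mul]; push_cast; ring_nf
  have hunit : ‖Complex.exp (-(Complex.I * θ))‖ = 1 := by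
    rw [show -(Complex.I * θ) = ((-θ : ℝ) : ℂ) * Complex.I by push_cast; ring,
      norm_exp_ofReal_mul_I]
  rw [hz, hsq]
  exact norm_heun_upwindSymbol_le_one hc0 hc hunit
end

section
/- Let ζ be the unique real root in the interval (2/5, 1/2) of x³ − 3x² + (3/2)x − 1/6 = 0 (ζ ≈ 0.4358665215), and define the rational function R(z) = (1 + (1 − 3ζ)z + (3ζ² − 3ζ + 1/2)z²)/(1 − ζz)³. Then for every z ∈ ℂ with Re z ≤ 0 one has 1 − ζz ≠ 0 and |R(z)| ≤ 1; i.e., the third-order L-stable SDIRK method is A-stable. -/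
/-!
Write `D(z) = (1 - ζz)³` and `N(z)` for the numerator of `R`, and `z = -u + iy` with `u ≥ 0`,
`v = y²`. Then `|D|² - |N|²` is a polynomial in `u` and `v`. Its `v` coefficient vanishes
identically (the method has order three), and apart from a term `-6 p(ζ) (uv + ζv² + ζu⁴)`,
`p` being the cubic, every coefficient is nonnegative as soon as `1/6 ≤ ζ ≤ 1/2`; the `v²`
coefficient `3(ζ - 1/6)(1/2 - ζ)` is the one that confines `ζ` to this interval. Hence
`|N| ≤ |D|` on the whole closed left half-plane, with no appeal to the maximum principle.
-/

open Complex

lemma Complex.normSq_one_add_mul_add_mul_sq (a b : ℝ) (z : ℂ) :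
    normSq (1 + a * z + b * z ^ 2) =
      (1 + a * z.re + b * (z.re ^ 2 - z.im ^ 2)) ^ 2 + z.im ^ 2 * (a + 2 * b * z.re) ^ 2 := by
  simp only [normSq_apply, add_re, add_im, mul_re, mul_im, ofReal_re, ofReal_im, one_re, one_im,
    pow_two]
  ring

lemma Complex.normSq_one_sub_mul (c : ℝ) (z : ℂ) :
    normSq (1 - c * z) = (1 - c * z.re) ^ 2 + c ^ 2 * z.im ^ 2 := by
  simp only [normSq_apply, sub_re, sub_im, mul_re, mul_im, ofReal_re, ofReal_im, one_re, one_im]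
  ring

lemma sdirk3_energy_identity (ζ u v : ℝ) :
    ((1 + ζ * u) ^ 2 + ζ ^ 2 * v) ^ 3 -
        ((1 - (1 - 3 * ζ) * u + (3 * ζ ^ 2 - 3 * ζ + 1 / 2) * (u ^ 2 - v)) ^ 2 +
          v * ((1 - 3 * ζ) - 2 * (3 * ζ ^ 2 - 3 * ζ + 1 / 2) * u) ^ 2) =
      2 * u + (12 * ζ - 2) * u ^ 2 + (1 - 9 * ζ + 24 * ζ ^ 2 + 2 * ζ ^ 3) * u ^ 3
        + 12 * ζ ^ 4 * u ^ 4 + 6 * ζ ^ 2 * u * v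
        + (6 * ζ - 1) * (6 * ζ ^ 2 - 3 * ζ + 1 / 2) * u ^ 2 * v
        + 3 * (ζ - 1 / 6) * (1 / 2 - ζ) * (u ^ 4 + v ^ 2)
        + 6 * ζ ^ 5 * u * (u ^ 2 + v) ^ 2 + ζ ^ 6 * (u ^ 2 + v) ^ 3
        - 6 * (ζ ^ 3 - 3 * ζ ^ 2 + (3 / 2) * ζ - 1 / 6) * (u * v + ζ * v ^ 2 + ζ * u ^ 4) := by
  ring

lemma sdirk3_energy_nonneg {ζ : ℝ} (hζ₁ : 1 / 6 ≤ ζ) (hζ₂ : ζ ≤ 1 / 2)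
    (hp : ζ ^ 3 - 3 * ζ ^ 2 + (3 / 2) * ζ - 1 / 6 ≤ 0) {x : ℝ} (hx : x ≤ 0) (y : ℝ) :
    (1 + (1 - 3 * ζ) * x + (3 * ζ ^ 2 - 3 * ζ + 1 / 2) * (x ^ 2 - y ^ 2)) ^ 2
        + y ^ 2 * ((1 - 3 * ζ) + 2 * (3 * ζ ^ 2 - 3 * ζ + 1 / 2) * x) ^ 2
      ≤ ((1 - ζ * x) ^ 2 + ζ ^ 2 * y ^ 2) ^ 3 := by
  set u := -x
  set v := y ^ 2
  have hu : 0 ≤ u := neg_nonneg.mpr hx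
  have hv : 0 ≤ v := sq_nonneg y
  have hζ : 0 ≤ ζ := by linarith
  have c₂ : 0 ≤ 12 * ζ - 2 := by linarith
  have c₃ : 0 ≤ 1 - 9 * ζ + 24 * ζ ^ 2 + 2 * ζ ^ 3 := by nlinarith [sq_nonneg (ζ - 3 / 16)]
  have c₂₁ : 0 ≤ (6 * ζ - 1) * (6 * ζ ^ 2 - 3 * ζ + 1 / 2) :=
    mul_nonneg (by linarith) (by nlinarith [sq_nonneg (ζ - 1 / 4)])
  have c₄ : 0 ≤ 3 * (ζ - 1 / 6) * (1 / 2 - ζ) :=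
    mul_nonneg (mul_nonneg (by norm_num) (by linarith)) (by linarith)
  have hw : 0 ≤ u * v + ζ * v ^ 2 + ζ * u ^ 4 := by positivity
  have := sdirk3_energy_identity ζ u v
  linarith [mul_nonneg c₂ (pow_nonneg hu 2), mul_nonneg c₃ (pow_nonneg hu 3),
    mul_nonneg (mul_nonneg c₂₁ (pow_nonneg hu 2)) hv,
    mul_nonneg c₄ (add_nonneg (pow_nonneg hu 4) (pow_nonneg hv 2)),
    mul_nonneg (neg_nonneg.mpr hp) hw,
    show 0 ≤ 12 * ζ ^ 4 * u ^ 4 + 6 * ζ ^ 2 * u * v + 6 * ζ ^ 5 * u * (u ^ 2 + v) ^ 2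
      + ζ ^ 6 * (u ^ 2 + v) ^ 3 by positivity]

/-- A-stability of the third-order L-stable SDIRK method: with `ζ` the real root in
`(2/5, 1/2)` of `x³ − 3x² + (3/2)x − 1/6 = 0`, its stability function
`R(z) = (1 + (1 − 3ζ)z + (3ζ² − 3ζ + 1/2)z²)/(1 − ζz)³` satisfies `1 − ζz ≠ 0` and
`|R(z)| ≤ 1` for every `z` in the closed left half-plane `Re z ≤ 0`. -/
theorem stmt_13 (ζ : ℝ) (hζ1 : 2 / 5 < ζ) (hζ2 : ζ < 1 / 2)
    (hroot : ζ ^ 3 - 3 * ζ ^ 2 + (3 / 2) * ζ - 1 / 6 = 0)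
    (R : ℂ → ℂ)
    (hR : ∀ z : ℂ, R z =
      (1 + (1 - 3 * (ζ : ℂ)) * z + (3 * (ζ : ℂ) ^ 2 - 3 * (ζ : ℂ) + 1 / 2) * z ^ 2) /
        (1 - (ζ : ℂ) * z) ^ 3) :
    ∀ z : ℂ, z.re ≤ 0 → 1 - (ζ : ℂ) * z ≠ 0 ∧ ‖R z‖ ≤ 1 := by
  intro z hz
  have hden : 1 - (ζ : ℂ) * z ≠ 0 := by
    intro h
    have := congrArg re h
    simp only [sub_re, one_re, re_ofReal_mul, zero_re] at this
    nlinarith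
  refine ⟨hden, ?_⟩
  have hnormSq : normSq (1 + (1 - 3 * (ζ : ℂ)) * z + (3 * (ζ : ℂ) ^ 2 - 3 * (ζ : ℂ) + 1 / 2) * z ^ 2)
      ≤ normSq ((1 - (ζ : ℂ) * z) ^ 3) := by
    have := normSq_one_add_mul_add_mul_sq (1 - 3 * ζ) (3 * ζ ^ 2 - 3 * ζ + 1 / 2) z
    push_cast at this
    rw [this, map_pow, normSq_one_sub_mul]
    exact sdirk3_energy_nonneg (by linarith) hζ2.le hroot.le hz z.im
  rw [hR, norm_div, div_le_one (norm_pos_iff.mpr (pow_ne_zero 3 hden)), ← sq_le_sq₀ (norm_nonneg _) (norm_nonneg _),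
    Complex.sq_norm, Complex.sq_norm]
  exact hnormSq
end
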